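/- Consider the two-bidder first-price auction with uniform priors and symmetric strategies parametrized by slopes (b₁, b₂) ∈ (0,∞)² via β(x) = b₁x for x ≤ 1/2 and β(x) = b₁/2 + b₂(x − 1/2) for x > 1/2. The point (b₁, b₂) = (1/2, 1/2) is the unique stationary point of the symmetric gradient field, i.e., the unique parameter pair at which the Gateaux derivative DU(β,β)[d] = ∫₀¹ d(x)·[(x − β(x))/β'(x) − x] dx vanishes for all directions d that are themselves piecewise linear of the same form. -/
import Mathlib


open MeasureTheory Set

/-- Piecewise linear bid function with two pieces of slopes `b₁, b₂`. -/
noncomputable def pwl (b₁ b₂ : ℝ) (x : ℝ) : ℝ :=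
  if x ≤ 1/2 then b₁ * x else b₁ / 2 + b₂ * (x - 1/2)

/-- Its piecewise derivative. -/
noncomputable def pwl' (b₁ b₂ : ℝ) (x : ℝ) : ℝ :=
  if x ≤ 1/2 then b₁ else b₂

open intervalIntegral in
/-- Closed form for the integral of a quadratic polynomial. -/
lemma integral_quad_aux (p q r a b : ℝ) :
    ∫ x in a..b, (p*x^2 + q*x + r) = p*(b^3-a^3)/3 + q*(b^2-a^2)/2 + r*(b-a) := by
  have h1 : IntervalIntegrable (fun x : ℝ => p*x^2) volume a b :=
    (continuous_const.mul (continuous_pow 2)).intervalIntegrable _ _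
  have h2 : IntervalIntegrable (fun x : ℝ => q*x) volume a b :=
    (continuous_const.mul continuous_id).intervalIntegrable _ _
  have h3 : IntervalIntegrable (fun x : ℝ => r) volume a b :=
    continuous_const.intervalIntegrable _ _
  rw [intervalIntegral.integral_add (h1.add h2) h3, intervalIntegral.integral_add h1 h2,
    intervalIntegral.integral_const_mul, intervalIntegral.integral_const_mul,
    integral_pow, integral_id, intervalIntegral.integral_const]
  simp only [smul_eq_mul]
  ring

/-- Closed form for the gradient-field pairing integral. -/
lemma pwl_gradient_key (b₁ b₂ : ℝ) (hb₁ : b₁ ≠ 0) (hb₂ : b₂ ≠ 0) (d₁ d₂ : ℝ) :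
    (∫ x in (0:ℝ)..1, pwl d₁ d₂ x * ((x - pwl b₁ b₂ x) / pwl' b₁ b₂ x - x))
      = d₁ * ((1-2*b₁)/(24*b₁) + (1-b₂)/(16*b₂) + (1-b₁)/(8*b₂) - 3/16)
      + d₂ * ((1-b₂)/(24*b₂) + (1-b₁)/(16*b₂) - 5/48) := by
  set f : ℝ → ℝ := fun x => pwl d₁ d₂ x * ((x - pwl b₁ b₂ x) / pwl' b₁ b₂ x - x) with hf
  set g₁ : ℝ → ℝ := fun x => (d₁*x) * ((x - b₁*x)/b₁ - x) with hg₁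
  set g₂ : ℝ → ℝ := fun x =>
    (d₁/2 + d₂*(x-1/2)) * ((x - (b₁/2 + b₂*(x-1/2)))/b₂ - x) with hg₂
  have c₁ : Continuous g₁ := by fun_prop
  have c₂ : Continuous g₂ := by fun_prop
  have e₁ : EqOn f g₁ (uIcc (0:ℝ) (1/2)) := by
    intro x hx
    rw [uIcc_of_le (by norm_num)] at hx
    simp only [hf, hg₁, pwl, pwl', if_pos hx.2]
  have e₂ : EqOn f g₂ (Ioc (1/2:ℝ) 1) := by
    intro x hx
    have hx' : ¬ x ≤ 1/2 := not_le.mpr hx.1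
    simp only [hf, hg₂, pwl, pwl', if_neg hx']
  have int₁ : IntervalIntegrable f volume 0 (1/2) := by
    rw [intervalIntegrable_iff_integrableOn_Ioc_of_le (by norm_num)]
    exact (c₁.integrableOn_Ioc).congr_fun
      (fun x hx => (e₁ (by rw [uIcc_of_le (by norm_num)]; exact Ioc_subset_Icc_self hx)).symm)
      measurableSet_Ioc
  have int₂ : IntervalIntegrable f volume (1/2) 1 := by
    rw [intervalIntegrable_iff_integrableOn_Ioc_of_le (by norm_num)]
    exact (c₂.integrableOn_Ioc).congr_fun (fun x hx => (e₂ hx).symm) measurableSet_Ioc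
  have i₁ : ∫ x in (0:ℝ)..(1/2), f x = ∫ x in (0:ℝ)..(1/2), g₁ x :=
    intervalIntegral.integral_congr e₁
  have i₂ : ∫ x in (1/2:ℝ)..1, f x = ∫ x in (1/2:ℝ)..1, g₂ x := by
    rw [intervalIntegral.integral_of_le (by norm_num),
      intervalIntegral.integral_of_le (by norm_num)]
    exact setIntegral_congr_fun measurableSet_Ioc e₂
  have hsplit : ∫ x in (0:ℝ)..1, f x
      = (∫ x in (0:ℝ)..(1/2), f x) + ∫ x in (1/2:ℝ)..1, f x :=
    (intervalIntegral.integral_add_adjacent_intervals int₁ int₂).symm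
  have eg₁ : ∀ x : ℝ, g₁ x = (d₁*(1/b₁ - 2))*x^2 + 0*x + 0 := by
    intro x; simp only [hg₁]; field_simp; ring
  have eg₂ : ∀ x : ℝ, g₂ x =
      (d₂*(1/b₂ - 2))*x^2
      + (d₂*(b₂-b₁)/(2*b₂) + (d₁-d₂)/2*(1/b₂ - 2))*x
      + ((d₁-d₂)*(b₂-b₁)/(4*b₂)) := by
    intro x; simp only [hg₂]; field_simp; ring
  rw [hsplit, i₁, i₂]
  simp only [eg₁, eg₂, integral_quad_aux]
  field_simp
  ring

/-- `(1/2, 1/2)` is the unique stationary point of the symmetric gradient field of the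
two-bidder first-price auction with uniform priors in the slope parametrization. -/
theorem first_price_pwl_unique_stationary_point (b₁ b₂ : ℝ) (hb₁ : 0 < b₁) (hb₂ : 0 < b₂) :
    (∀ d₁ d₂ : ℝ,
      (∫ x in (0:ℝ)..1, pwl d₁ d₂ x * ((x - pwl b₁ b₂ x) / pwl' b₁ b₂ x - x)) = 0)
    ↔ (b₁ = 1/2 ∧ b₂ = 1/2) := by
  have hb₁' : b₁ ≠ 0 := hb₁.ne'
  have hb₂' : b₂ ≠ 0 := hb₂.ne'
  constructor
  · intro H
    have h1 := (pwl_gradient_key b₁ b₂ hb₁' hb₂' 1 0).symm.trans (H 1 0)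
    have h2 := (pwl_gradient_key b₁ b₂ hb₁' hb₂' 0 1).symm.trans (H 0 1)
    have eA : 6*b₁^2 + 16*b₁*b₂ - 9*b₁ - 2*b₂ = 0 := by
      field_simp at h1; nlinarith [h1]
    have hB : 3*b₁ + 7*b₂ - 5 = 0 := by
      field_simp at h2; nlinarith [h2]
    have hfac : (3*b₁ - 10)*(2*b₁ - 1) = 0 := by
      linear_combination (-7)*eA + (16*b₁-2)*hB
    rcases mul_eq_zero.mp hfac with h | h
    · exfalso; nlinarith
    · have hb1 : b₁ = 1/2 := by linarith
      exact ⟨hb1, by linarith⟩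
  · rintro ⟨rfl, rfl⟩ d₁ d₂
    rw [pwl_gradient_key _ _ hb₁' hb₂']
    norm_num
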